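/- arXiv:math/9911172 — 3 statements merged into one kernel-verified Lean document; each statement's English description precedes it below -/
import Mathlib

section
/- Let ‖·‖ be a semi-norm on ℝⁿ with standard basis e₁,…,eₙ such that ‖e₁ + e₂ + ⋯ + eₙ‖ = ‖e₁‖ + ‖e₂‖ + ⋯ + ‖eₙ‖. Then for all nonnegative reals c₁,…,cₙ, we have ‖c₁e₁ + ⋯ + cₙeₙ‖ = c₁‖e₁‖ + ⋯ + cₙ‖eₙ‖. -/
namespace Seminorm

variable {E ι : Type*} [AddCommGroup E] [Module ℝ E] (p : Seminorm ℝ E) (s : Finset ι) (v : ι → E)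

theorem map_sum_le_sum : p (∑ i ∈ s, v i) ≤ ∑ i ∈ s, p (v i) :=
  Finset.le_sum_of_subadditive p (map_zero p).le (map_add_le_add p) s v

theorem map_smul_of_nonneg {c : ℝ} (hc : 0 ≤ c) (x : E) : p (c • x) = c * p x := by
  rw [map_smul_eq_mul, Real.norm_of_nonneg hc]

theorem map_sum_smul_le {c : ι → ℝ} (hc : ∀ i ∈ s, 0 ≤ c i) :
    p (∑ i ∈ s, c i • v i) ≤ ∑ i ∈ s, c i * p (v i) :=
  (p.map_sum_le_sum s _).trans_eq <|
    Finset.sum_congr rfl fun i hi => p.map_smul_of_nonneg (hc i hi) (v i)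

theorem map_sum_smul_of_map_sum_eq (h : p (∑ i ∈ s, v i) = ∑ i ∈ s, p (v i)) {c : ι → ℝ}
    (hc : ∀ i ∈ s, 0 ≤ c i) : p (∑ i ∈ s, c i • v i) = ∑ i ∈ s, c i * p (v i) := by
  refine le_antisymm (p.map_sum_smul_le s v hc) ?_
  -- Complete the weights `c` to a constant weight `C`, where the triangle inequality is sharp.
  set C := ∑ i ∈ s, c i
  have hC : 0 ≤ C := Finset.sum_nonneg hc
  have hCc : ∀ i ∈ s, 0 ≤ C - c i := fun i hi => sub_nonneg.2 (Finset.single_le_sum hc hi)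
  have hsplit : C • ∑ i ∈ s, v i = ∑ i ∈ s, c i • v i + ∑ i ∈ s, (C - c i) • v i := by
    rw [← Finset.sum_add_distrib, Finset.smul_sum]
    exact Finset.sum_congr rfl fun i _ => by rw [← add_smul, add_sub_cancel]
  have hrest : ∑ i ∈ s, (C - c i) * p (v i) = C * ∑ i ∈ s, p (v i) - ∑ i ∈ s, c i * p (v i) := by
    rw [Finset.mul_sum, ← Finset.sum_sub_distrib]
    exact Finset.sum_congr rfl fun i _ => sub_mul _ _ _
  have : C * ∑ i ∈ s, p (v i) ≤ p (∑ i ∈ s, c i • v i) + ∑ i ∈ s, (C - c i) * p (v i) :=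
    calc C * ∑ i ∈ s, p (v i) = p (C • ∑ i ∈ s, v i) := by rw [p.map_smul_of_nonneg hC, h]
      _ ≤ p (∑ i ∈ s, c i • v i) + p (∑ i ∈ s, (C - c i) • v i) := hsplit ▸ map_add_le_add p _ _
      _ ≤ p (∑ i ∈ s, c i • v i) + ∑ i ∈ s, (C - c i) * p (v i) :=
        add_le_add_right (p.map_sum_smul_le s v hCc) _
  linarith

end Seminorm

/-- Additivity of a semi-norm on the nonnegative orthant, given additivity
at the all-ones point. -/
theorem seminorm_additive_on_nonneg_orthant (n : ℕ) (p : Seminorm ℝ (Fin n → ℝ))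
    (h : p (∑ i, Pi.single i (1 : ℝ)) = ∑ i, p (Pi.single i (1 : ℝ)))
    (c : Fin n → ℝ) (hc : ∀ i, 0 ≤ c i) :
    p (∑ i, c i • (Pi.single i (1 : ℝ) : Fin n → ℝ)) = ∑ i, c i * p (Pi.single i (1 : ℝ)) :=
  p.map_sum_smul_of_map_sum_eq Finset.univ _ h fun i _ => hc i
end

section
/- Define the sequence f_l(z) ∈ ℤ[z,z⁻¹] by f₁ = 0, f₂ = 1/z, and f_l = f_{l−2} − z·f_{l−1} for l ≥ 3. Then for every l ≥ 2, f_l is nonzero; moreover for l ≥ 3 odd all coefficients of f_l are nonpositive (and f_l ≠ 0), and for l ≥ 2 even all coefficients of f_l are nonnegative (and f_l ≠ 0). -/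
/-!
Twisting by the sign, `g_l = (-1)^l f_l` satisfies `g_l = g_{l-2} + z g_{l-1}`, a recursion
that preserves nonnegativity of coefficients. Nonnegative coefficients cannot cancel, so
`g_l ≠ 0` follows from `z g_{l-1} ≠ 0`, `z` being a unit.
-/

namespace LaurentPolynomial

variable {R : Type*}

def CoeffNonneg [Semiring R] [PartialOrder R] (p : R[T;T⁻¹]) : Prop :=
  ∀ m, 0 ≤ p.coeff m

section Semiring

variable [Semiring R]

lemma coeff_T_mul (n m : ℤ) (p : R[T;T⁻¹]) : (T n * p).coeff m = p.coeff (m - n) := by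
  rw [T, AddMonoidAlgebra.coeff_single_mul_apply, one_mul, neg_add_eq_sub]

lemma T_mul_ne_zero {p : R[T;T⁻¹]} (n : ℤ) (hp : p ≠ 0) : T n * p ≠ 0 :=
  fun h => hp ((isUnit_T n).mul_right_eq_zero.mp h)

variable [PartialOrder R] {p q : R[T;T⁻¹]}

lemma coeffNonneg_zero : CoeffNonneg (0 : R[T;T⁻¹]) := fun _ => le_rfl

lemma CoeffNonneg.T_mul (n : ℤ) (hp : CoeffNonneg p) : CoeffNonneg (T n * p) := fun m => by
  rw [coeff_T_mul]
  exact hp _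

lemma coeffNonneg_T [ZeroLEOneClass R] (n : ℤ) : CoeffNonneg (T n : R[T;T⁻¹]) := fun m => by
  rw [T_apply]
  split_ifs
  exacts [zero_le_one, le_rfl]

variable [IsOrderedAddMonoid R]

lemma CoeffNonneg.add (hp : CoeffNonneg p) (hq : CoeffNonneg q) : CoeffNonneg (p + q) :=
  fun m => add_nonneg (hp m) (hq m)

lemma CoeffNonneg.add_ne_zero (hp : CoeffNonneg p) (hq : CoeffNonneg q) (hq0 : q ≠ 0) :
    p + q ≠ 0 := by
  intro hpq
  refine hq0 (LaurentPolynomial.ext fun m => ?_)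
  have hm : p.coeff m + q.coeff m = 0 := by simpa using congrArg (·.coeff m) hpq
  exact ((add_eq_zero_iff_of_nonneg (hp m) (hq m)).mp hm).2

lemma coeffNonneg_and_ne_zero_of_eq_add_T_mul {g : ℕ → R[T;T⁻¹]} {k : ℤ}
    (h0 : CoeffNonneg (g 0)) (h1 : CoeffNonneg (g 1)) (h1' : g 1 ≠ 0)
    (hrec : ∀ n, g (n + 2) = g n + T k * g (n + 1)) (n : ℕ) :
    CoeffNonneg (g (n + 1)) ∧ g (n + 1) ≠ 0 := by
  suffices CoeffNonneg (g n) ∧ CoeffNonneg (g (n + 1)) ∧ g (n + 1) ≠ 0 from this.2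
  induction n with
  | zero => exact ⟨h0, h1, h1'⟩
  | succ n ih =>
    obtain ⟨hn, hn1, hn1'⟩ := ih
    have hT := hn1.T_mul k
    exact ⟨hn1, hrec n ▸ hn.add hT, hrec n ▸ hn.add_ne_zero hT (T_mul_ne_zero k hn1')⟩

end Semiring

lemma neg_one_pow_smul_eq_add_T_mul [Ring R] {f : ℕ → R[T;T⁻¹]} {k : ℤ} {n : ℕ}
    (h : f (n + 2) = f n - T k * f (n + 1)) :
    (-1 : ℤ) ^ (n + 2) • f (n + 2) =
      (-1 : ℤ) ^ n • f n + T k * ((-1 : ℤ) ^ (n + 1) • f (n + 1)) := by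
  rw [h, mul_smul_comm, pow_succ, pow_succ, smul_sub]
  simp only [mul_neg, mul_one, neg_neg, neg_smul]
  abel

end LaurentPolynomial

open LaurentPolynomial in
/-- The Laurent polynomial sequence `f₁ = 0`, `f₂ = 1/z`, `f_l = f_{l-2} - z·f_{l-1}`:
for every `l ≥ 2`, `f_l ≠ 0`; for odd `l ≥ 3` all coefficients of `f_l` are
nonpositive, and for even `l ≥ 2` all coefficients are nonnegative. -/
theorem laurent_recursion_sign_pattern (f : ℕ → LaurentPolynomial ℤ)
    (hf1 : f 1 = 0)
    (hf2 : f 2 = LaurentPolynomial.T (-1))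
    (hrec : ∀ l : ℕ, 3 ≤ l → f l = f (l - 2) - LaurentPolynomial.T 1 * f (l - 1)) :
    (∀ l : ℕ, 2 ≤ l → f l ≠ 0) ∧
    (∀ l : ℕ, 3 ≤ l → Odd l → (∀ m : ℤ, (f l).coeff m ≤ 0) ∧ f l ≠ 0) ∧
    (∀ l : ℕ, 2 ≤ l → Even l → (∀ m : ℤ, 0 ≤ (f l).coeff m) ∧ f l ≠ 0) := by
  set g : ℕ → LaurentPolynomial ℤ := fun l => (-1 : ℤ) ^ l • f l
  have hg_rec : ∀ n, g (n + 3) = g (n + 1) + T 1 * g (n + 2) := fun n =>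
    neg_one_pow_smul_eq_add_T_mul (hrec (n + 3) (by omega))
  have hg : ∀ l, 2 ≤ l → CoeffNonneg (g l) ∧ g l ≠ 0 := by
    intro l hl
    obtain ⟨n, rfl⟩ := Nat.exists_eq_add_of_le' hl
    exact coeffNonneg_and_ne_zero_of_eq_add_T_mul (g := fun n => g (n + 1))
      (by simp [g, hf1, coeffNonneg_zero]) (by simpa [g, hf2] using coeffNonneg_T (-1))
      (by simpa [g, hf2] using (isUnit_T (-1)).ne_zero) hg_rec n
  have hf_even : ∀ l, Even l → f l = g l := fun l hl => by simp [g, hl.neg_one_pow]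
  have hf_odd : ∀ l, Odd l → f l = -g l := fun l hl => by simp [g, hl.neg_one_pow]
  refine ⟨fun l hl => ?_, fun l hl hodd => ?_, fun l hl heven => ?_⟩
  · rcases Nat.even_or_odd l with heven | hodd
    · rw [hf_even l heven]; exact (hg l hl).2
    · rw [hf_odd l hodd, neg_ne_zero]; exact (hg l hl).2
  · obtain ⟨hnonneg, hne⟩ := hg l (by omega)
    rw [hf_odd l hodd]
    exact ⟨fun m => by simpa using hnonneg m, neg_ne_zero.mpr hne⟩
  · rw [hf_even l heven]; exact hg l hl
end

section
/- Let ‖·‖_A and ‖·‖_T be two semi-norms on ℝʳ (r ≥ 2) with ‖C‖_A ≤ ‖C‖_T for all C, and suppose ‖·‖_T is additive on the nonnegative orthant with ‖e⁽ʲ⁾‖_T = dⱼ for each standard basis vector e⁽ʲ⁾, and ‖e⁽ʲ⁾‖_A = dⱼ, and ‖(1,…,1)‖_A = ‖(1,…,1)‖_T = ∑ⱼ dⱼ. Then ‖C‖_A = ‖C‖_T for all C with all coordinates nonnegative. -/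
/-- If the Alexander norm `pA` is dominated by the Thurston norm `pT`, the Thurston
norm is additive on the nonnegative orthant with values `dⱼ` at basis vectors,
`pA` agrees with `dⱼ` at the basis vectors, and the two norms agree at `(1,…,1)`,
then the two norms agree on the entire nonnegative orthant. -/
theorem alexander_eq_thurston_on_nonneg (r : ℕ) (hr : 2 ≤ r)
    (pA pT : Seminorm ℝ (Fin r → ℝ)) (d : Fin r → ℝ)
    (hle : ∀ C, pA C ≤ pT C)
    (hTadd : ∀ C : Fin r → ℝ, (∀ j, 0 ≤ C j) → pT C = ∑ j, C j * d j)
    (hTe : ∀ j, pT (Pi.single j (1 : ℝ)) = d j)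
    (hAe : ∀ j, pA (Pi.single j (1 : ℝ)) = d j)
    (hA1 : pA (fun _ => (1 : ℝ)) = ∑ j, d j)
    (hT1 : pT (fun _ => (1 : ℝ)) = ∑ j, d j)
    (C : Fin r → ℝ) (hC : ∀ j, 0 ≤ C j) :
    pA C = pT C := by
  set M : ℝ := ∑ j, C j with hM
  have hM0 : 0 ≤ M := Finset.sum_nonneg fun j _ => hC j
  have hDnn : ∀ j, 0 ≤ M - C j := fun j =>
    sub_nonneg.2 (Finset.single_le_sum (fun i _ => hC i) (Finset.mem_univ j))
  set D : Fin r → ℝ := fun j => M - C j with hD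
  have hAM : pA (fun _ => M) = M * ∑ j, d j := by
    have h : (fun _ : Fin r => M) = M • (fun _ : Fin r => (1 : ℝ)) := by
      ext i; simp
    rw [h, map_smul_eq_mul, Real.norm_of_nonneg hM0, hA1]
  have htri : pA (fun _ => M) ≤ pA C + pA D := by
    have h : (fun _ : Fin r => M) = C + D := by ext i; simp [hD]
    rw [h]; exact map_add_le_add pA C D
  have hTC : pT C = ∑ j, C j * d j := hTadd C hC
  have hTD : pT D = ∑ j, D j * d j := hTadd D hDnn
  have hsum : ∑ j, C j * d j + ∑ j, D j * d j = M * ∑ j, d j := by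
    rw [← Finset.sum_add_distrib, Finset.mul_sum]
    exact Finset.sum_congr rfl fun j _ => by simp [hD]; ring
  have h1 : pA C ≤ pT C := hle C
  have h2 : pA D ≤ pT D := hle D
  linarith [htri, hAM]
end
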